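/- The only linear map D : ℝ̃_ρ² → ℝ̃_ρ² which is a weak little-oh of h (i.e. D(h) = h·r(h) for some r with r(h) → 0 in the sharp topology as h → 0) is the zero map. Consequently, the ℝ̃_ρ-differential of a map at a point, when it exists as a linear basic function, is unique. -/

import Mathlib

open Filter Topology

namespace RC

def F : Filter ℝ := nhdsWithin 0 (Set.Ioi 0)

/-- A gauge: a net `ρ : (0,1] → (0,1]` with `ρ ε → 0` as `ε → 0⁺`. -/
def Gauge (ρ : ℝ → ℝ) : Prop :=
  (∀ ε ∈ Set.Ioc (0:ℝ) 1, ρ ε ∈ Set.Ioc (0:ℝ) 1) ∧ Tendsto ρ F (nhds 0)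

/-- ρ-moderate real nets: `x_ε = O(ρ_ε^{-N})` for some `N`. -/
def Mod (ρ x : ℝ → ℝ) : Prop :=
  ∃ N : ℕ, ∃ C : ℝ, ∀ᶠ ε in F, |x ε| ≤ C * (ρ ε)⁻¹ ^ N

/-- ρ-negligible real nets: `x_ε = O(ρ_ε^{N})` for all `N`. -/
def Ngl (ρ x : ℝ → ℝ) : Prop :=
  ∀ N : ℕ, ∃ C : ℝ, ∀ᶠ ε in F, |x ε| ≤ C * ρ ε ^ N

def Eqv (ρ x y : ℝ → ℝ) : Prop := Ngl ρ (x - y)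

/-- The order on generalized numbers, at the level of representatives. -/
def leG (ρ x y : ℝ → ℝ) : Prop :=
  ∀ x', Mod ρ x' → Eqv ρ x' x → ∃ y', Mod ρ y' ∧ Eqv ρ y' y ∧ ∀ᶠ ε in F, x' ε ≤ y' ε

/-- Invertibility in the quotient ring, at the level of representatives. -/
def InvG (ρ x : ℝ → ℝ) : Prop := ∃ y, Mod ρ y ∧ Eqv ρ (x * y) 1

def ltG (ρ x y : ℝ → ℝ) : Prop := leG ρ x y ∧ InvG ρ (y - x)

def posInv (ρ r : ℝ → ℝ) : Prop := ltG ρ 0 r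

def ModC (ρ : ℝ → ℝ) (x : ℝ → ℂ) : Prop :=
  ∃ N : ℕ, ∃ C : ℝ, ∀ᶠ ε in F, ‖x ε‖ ≤ C * (ρ ε)⁻¹ ^ N

def NglC (ρ : ℝ → ℝ) (x : ℝ → ℂ) : Prop :=
  ∀ N : ℕ, ∃ C : ℝ, ∀ᶠ ε in F, ‖x ε‖ ≤ C * ρ ε ^ N

def EqvC (ρ : ℝ → ℝ) (x y : ℝ → ℂ) : Prop := NglC ρ (x - y)

def InvC (ρ : ℝ → ℝ) (x : ℝ → ℂ) : Prop := ∃ y, ModC ρ y ∧ EqvC ρ (x * y) 1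

noncomputable def absC (x : ℝ → ℂ) : ℝ → ℝ := fun ε => ‖x ε‖

abbrev V2 := EuclideanSpace ℝ (Fin 2)

def ModV2 (ρ : ℝ → ℝ) (x : ℝ → V2) : Prop :=
  ∃ N : ℕ, ∃ C : ℝ, ∀ᶠ ε in F, ‖x ε‖ ≤ C * (ρ ε)⁻¹ ^ N

def NglV2 (ρ : ℝ → ℝ) (x : ℝ → V2) : Prop :=
  ∀ N : ℕ, ∃ C : ℝ, ∀ᶠ ε in F, ‖x ε‖ ≤ C * ρ ε ^ N

def EqvV2 (ρ : ℝ → ℝ) (x y : ℝ → V2) : Prop := NglV2 ρ (x - y)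

/-- `D` represents an `ℝ̃_ρ`-linear map `ℝ̃_ρ² → ℝ̃_ρ²`. -/
def IsLinearNet (ρ : ℝ → ℝ) (D : (ℝ → V2) → ℝ → V2) : Prop :=
  (∀ x y, ModV2 ρ x → ModV2 ρ y → EqvV2 ρ x y → EqvV2 ρ (D x) (D y)) ∧
  (∀ x, ModV2 ρ x → ModV2 ρ (D x)) ∧
  (∀ x y, ModV2 ρ x → ModV2 ρ y → EqvV2 ρ (D (x + y)) (D x + D y)) ∧
  (∀ (α : ℝ → ℝ) (x), Mod ρ α → ModV2 ρ x →
    EqvV2 ρ (D fun ε => α ε • x ε) (fun ε => α ε • D x ε))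

/-- `D(h) = h · r(h)` with `r(h) → 0` sharply as `h → 0`: a weak little-oh of `h`. -/
def IsWeakOhNet (ρ : ℝ → ℝ) (D : (ℝ → V2) → ℝ → V2) : Prop :=
  ∃ r : (ℝ → V2) → ℝ → ℝ,
    (∀ h, ModV2 ρ h → EqvV2 ρ (D h) (fun ε => r h ε • h ε)) ∧
    ∀ q : ℕ, ∃ H : ℝ → ℝ, Mod ρ H ∧ posInv ρ H ∧
      ∀ h, ModV2 ρ h → InvG ρ (fun ε => ‖h ε‖) → ltG ρ (fun ε => ‖h ε‖) H →
        ltG ρ (fun ε => |r h ε|) (fun ε => ρ ε ^ q)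

/-! Test the little-oh condition at `h = t • e`, where `e` is a unit vector and `t = (c/2) ρ^m`
is invertible and lies strictly below the threshold `H ≥ c ρ^m` of the condition for the
exponent `q`. Linearity gives `t • D e ≈ D h ≈ r(h) t • e`; dividing by `t` yields
`D e ≈ r(h) e`, and `|r(h)| < ρ^q`. Since `q` is arbitrary, `D e` is negligible, so `D` kills
both basis vectors and hence, by linearity, every moderate net. Uniqueness of differentials is
this statement for `D₁ - D₂`. -/

open Asymptotics

lemma exists_eventually_le_iff_isBigO {α E : Type*} [SeminormedAddCommGroup E] {l : Filter α}
    {f : α → E} {g : α → ℝ} (hg : ∀ᶠ a in l, 0 ≤ g a) :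
    (∃ C : ℝ, ∀ᶠ a in l, ‖f a‖ ≤ C * g a) ↔ f =O[l] g := by
  rw [isBigO_iff]
  refine exists_congr fun C => eventually_congr (hg.mono fun a ha => ?_)
  rw [Real.norm_of_nonneg ha]

variable {ρ : ℝ → ℝ}

namespace Gauge

variable (hρ : Gauge ρ)
include hρ

lemma eventually_mem_Ioc : ∀ᶠ ε in F, ρ ε ∈ Set.Ioc (0 : ℝ) 1 :=
  mem_of_superset (Ioc_mem_nhdsGT one_pos) fun ε hε => hρ.1 ε hε

lemma eventually_pos : ∀ᶠ ε in F, 0 < ρ ε :=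
  hρ.eventually_mem_Ioc.mono fun _ h => h.1

lemma eventually_le_one : ∀ᶠ ε in F, ρ ε ≤ 1 :=
  hρ.eventually_mem_Ioc.mono fun _ h => h.2

lemma eventually_mul_pow_succ_le (C : ℝ) {c : ℝ} (hc : 0 < c) (m : ℕ) :
    ∀ᶠ ε in F, C * ρ ε ^ (m + 1) ≤ c * ρ ε ^ m := by
  have hsmall : ∀ᶠ ε in F, C * ρ ε < c := by
    simpa using (hρ.2.const_mul C).eventually_lt_const (by simpa using hc)
  filter_upwards [hsmall, hρ.eventually_pos] with ε hε hpos
  calc C * ρ ε ^ (m + 1) = C * ρ ε * ρ ε ^ m := by ring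
    _ ≤ c * ρ ε ^ m := mul_le_mul_of_nonneg_right hε.le (by positivity)

lemma isBigO_inv_pow_of_le {N M : ℕ} (h : N ≤ M) :
    (fun ε => (ρ ε)⁻¹ ^ N) =O[F] fun ε => (ρ ε)⁻¹ ^ M := by
  refine IsBigO.of_bound 1 ?_
  filter_upwards [hρ.eventually_pos, hρ.eventually_le_one] with ε hpos hle
  have hinv : 1 ≤ (ρ ε)⁻¹ := (one_le_inv₀ hpos).2 hle
  rw [one_mul, Real.norm_of_nonneg (by positivity), Real.norm_of_nonneg (by positivity)]
  exact pow_le_pow_right₀ hinv h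

lemma nglV2_iff {x : ℝ → V2} : NglV2 ρ x ↔ ∀ N : ℕ, x =O[F] fun ε => ρ ε ^ N :=
  forall_congr' fun _ =>
    exists_eventually_le_iff_isBigO (hρ.eventually_pos.mono fun _ h => by positivity)

lemma modV2_iff {x : ℝ → V2} : ModV2 ρ x ↔ ∃ N : ℕ, x =O[F] fun ε => (ρ ε)⁻¹ ^ N :=
  exists_congr fun _ =>
    exists_eventually_le_iff_isBigO (hρ.eventually_pos.mono fun _ h => by positivity)

lemma mod_iff {x : ℝ → ℝ} : Mod ρ x ↔ ∃ N : ℕ, x =O[F] fun ε => (ρ ε)⁻¹ ^ N := by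
  simp only [Mod, ← Real.norm_eq_abs]
  exact exists_congr fun _ =>
    exists_eventually_le_iff_isBigO (hρ.eventually_pos.mono fun _ h => by positivity)

end Gauge

lemma eqv_refl (x : ℝ → ℝ) : Eqv ρ x x := fun _ => ⟨0, by simp⟩

lemma modV2_const (e : V2) : ModV2 ρ fun _ => e := ⟨0, ‖e‖, by simp⟩

lemma Mod.smul_const {α : ℝ → ℝ} (hα : Mod ρ α) (e : V2) : ModV2 ρ fun ε => α ε • e := by
  obtain ⟨N, C, hC⟩ := hα
  refine ⟨N, C * ‖e‖, hC.mono fun ε hε => ?_⟩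
  rw [norm_smul, mul_right_comm, Real.norm_eq_abs]
  exact mul_le_mul_of_nonneg_right hε (norm_nonneg e)

lemma ModV2.apply {x : ℝ → V2} (hx : ModV2 ρ x) (i : Fin 2) : Mod ρ fun ε => x ε i := by
  obtain ⟨N, C, hC⟩ := hx
  exact ⟨N, C, hC.mono fun ε hε => (PiLp.norm_apply_le (x ε) i).trans hε⟩

lemma ModV2.sub (hρ : Gauge ρ) {x y : ℝ → V2} (hx : ModV2 ρ x) (hy : ModV2 ρ y) :
    ModV2 ρ (x - y) := by
  obtain ⟨N, hN⟩ := hρ.modV2_iff.1 hx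
  obtain ⟨M, hM⟩ := hρ.modV2_iff.1 hy
  exact hρ.modV2_iff.2 ⟨max N M, (hN.trans (hρ.isBigO_inv_pow_of_le (le_max_left N M))).sub
    (hM.trans (hρ.isBigO_inv_pow_of_le (le_max_right N M)))⟩

namespace NglV2

lemma modV2 {x : ℝ → V2} (hx : NglV2 ρ x) : ModV2 ρ x := by
  obtain ⟨C, hC⟩ := hx 0
  exact ⟨0, C, by simpa using hC⟩

lemma congr {x y : ℝ → V2} (hx : NglV2 ρ x) (hxy : x =ᶠ[F] y) : NglV2 ρ y := fun N => by
  obtain ⟨C, hC⟩ := hx N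
  exact ⟨C, by filter_upwards [hC, hxy] with ε hε hεxy; rwa [← hεxy]⟩

variable (hρ : Gauge ρ)
include hρ

lemma add {x y : ℝ → V2} (hx : NglV2 ρ x) (hy : NglV2 ρ y) : NglV2 ρ (x + y) :=
  hρ.nglV2_iff.2 fun N => (hρ.nglV2_iff.1 hx N).add (hρ.nglV2_iff.1 hy N)

lemma sub {x y : ℝ → V2} (hx : NglV2 ρ x) (hy : NglV2 ρ y) : NglV2 ρ (x - y) :=
  hρ.nglV2_iff.2 fun N => (hρ.nglV2_iff.1 hx N).sub (hρ.nglV2_iff.1 hy N)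

lemma of_eqvV2 {x y : ℝ → V2} (hxy : EqvV2 ρ x y) (hy : NglV2 ρ y) : NglV2 ρ x := by
  simpa using add hρ hxy hy

lemma mod_smul {α : ℝ → ℝ} {z : ℝ → V2} (hα : Mod ρ α) (hz : NglV2 ρ z) :
    NglV2 ρ fun ε => α ε • z ε := by
  obtain ⟨M, hM⟩ := hρ.mod_iff.1 hα
  refine hρ.nglV2_iff.2 fun N => ((hM.smul (hρ.nglV2_iff.1 hz (N + M))).trans_eventuallyEq ?_)
  filter_upwards [hρ.eventually_pos] with ε hε
  simp only [smul_eq_mul, pow_add, inv_pow]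
  field_simp

end NglV2

namespace EqvV2

lemma symm {x y : ℝ → V2} (h : EqvV2 ρ x y) : EqvV2 ρ y x := fun N => by
  obtain ⟨C, hC⟩ := h N
  exact ⟨C, hC.mono fun ε hε => by rwa [Pi.sub_apply, norm_sub_rev]⟩

lemma trans (hρ : Gauge ρ) {x y z : ℝ → V2} (hxy : EqvV2 ρ x y) (hyz : EqvV2 ρ y z) :
    EqvV2 ρ x z := by
  simpa [EqvV2] using hxy.add hρ hyz

lemma sub (hρ : Gauge ρ) {x y u v : ℝ → V2} (hxy : EqvV2 ρ x y) (huv : EqvV2 ρ u v) :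
    EqvV2 ρ (x - u) (y - v) := by
  have := NglV2.sub hρ hxy huv
  unfold EqvV2
  convert this using 1
  abel

end EqvV2

lemma leG.exists_eventually_le_add {a b : ℝ → ℝ} (h : leG ρ a b) (ha : Mod ρ a) (N : ℕ) :
    ∃ C : ℝ, ∀ᶠ ε in F, a ε ≤ b ε + C * ρ ε ^ N := by
  obtain ⟨b', -, hb', hab'⟩ := h a ha (eqv_refl a)
  obtain ⟨C, hC⟩ := hb' N
  refine ⟨C, ?_⟩
  filter_upwards [hab', hC] with ε hε hCε
  linarith [le_abs_self ((b' - b) ε), show (b' - b) ε = b' ε - b ε from rfl]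

section LowerBounds

variable (hρ : Gauge ρ)
include hρ

lemma mod_inv_of_lower_bound {x : ℝ → ℝ} {m : ℕ} {c : ℝ} (hc : 0 < c)
    (hx : ∀ᶠ ε in F, c * ρ ε ^ m ≤ |x ε|) : Mod ρ fun ε => (x ε)⁻¹ := by
  refine ⟨m, c⁻¹, ?_⟩
  filter_upwards [hx, hρ.eventually_pos] with ε hε hpos
  rw [abs_inv, inv_pow, ← mul_inv]
  exact inv_anti₀ (by positivity) hε

lemma invG_of_lower_bound {x : ℝ → ℝ} {m : ℕ} {c : ℝ} (hc : 0 < c)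
    (hx : ∀ᶠ ε in F, c * ρ ε ^ m ≤ |x ε|) : InvG ρ x := by
  refine ⟨fun ε => (x ε)⁻¹, mod_inv_of_lower_bound hρ hc hx, fun N => ⟨0, ?_⟩⟩
  filter_upwards [hx, hρ.eventually_pos] with ε hε hpos
  have hx0 : x ε ≠ 0 := abs_pos.1 (lt_of_lt_of_le (by positivity) hε)
  simp [hx0]

lemma InvG.exists_lower_bound {x : ℝ → ℝ} (hx : InvG ρ x) :
    ∃ m : ℕ, ∃ c : ℝ, 0 < c ∧ ∀ᶠ ε in F, c * ρ ε ^ m ≤ |x ε| := by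
  obtain ⟨y, ⟨N, C, hy⟩, hxy⟩ := hx
  obtain ⟨C₁, hC₁⟩ := hxy 1
  have hM : 0 < max C 1 := lt_max_of_lt_right one_pos
  refine ⟨N, 1 / (2 * max C 1), by positivity, ?_⟩
  have hsmall : ∀ᶠ ε in F, C₁ * ρ ε ^ 1 ≤ 1 / 2 * ρ ε ^ 0 :=
    hρ.eventually_mul_pow_succ_le C₁ one_half_pos 0
  filter_upwards [hy, hC₁, hsmall, hρ.eventually_pos] with ε hyε hxyε hsmallε hpos
  have hprod : 1 / 2 ≤ |x ε| * |y ε| := by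
    simp only [Pi.sub_apply, Pi.mul_apply, Pi.one_apply, pow_one, pow_zero, mul_one] at hxyε hsmallε
    have := abs_sub_abs_le_abs_sub 1 (x ε * y ε)
    rw [abs_one, abs_sub_comm] at this
    rw [← abs_mul]
    linarith
  have hyM : |y ε| ≤ max C 1 * (ρ ε ^ N)⁻¹ := by
    rw [← inv_pow]
    exact hyε.trans (mul_le_mul_of_nonneg_right (le_max_left C 1) (by positivity))
  have := hprod.trans (mul_le_mul_of_nonneg_left hyM (abs_nonneg (x ε)))
  have hρN : 0 < ρ ε ^ N := by positivity
  field_simp at this ⊢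
  linarith

lemma posInv.exists_lower_bound {H : ℝ → ℝ} (hH : posInv ρ H) :
    ∃ m : ℕ, ∃ c : ℝ, 0 < c ∧ ∀ᶠ ε in F, c * ρ ε ^ m ≤ H ε := by
  obtain ⟨hle, hinv⟩ := hH
  obtain ⟨m, c, hc, hlow⟩ := InvG.exists_lower_bound hρ (by simpa using hinv)
  obtain ⟨C, hC⟩ := leG.exists_eventually_le_add hle ⟨0, 0, by simp⟩ (m + 1)
  refine ⟨m, c, hc, ?_⟩
  filter_upwards [hlow, hC, hρ.eventually_mul_pow_succ_le C (half_pos hc) m,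
    hρ.eventually_pos] with ε hlowε hCε hsmallε hpos
  have hcρ : 0 < c * ρ ε ^ m := by positivity
  rcases abs_cases (H ε) with ⟨habs, -⟩ | ⟨habs, -⟩
  · rwa [habs] at hlowε
  · simp only [Pi.zero_apply] at hCε
    linarith

lemma ltG_of_lower_bound_sub {a b : ℝ → ℝ} {m : ℕ} {c : ℝ} (hc : 0 < c) (hb : Mod ρ b)
    (hab : ∀ᶠ ε in F, c * ρ ε ^ m ≤ b ε - a ε) : ltG ρ a b := by
  refine ⟨fun a' _ ha' => ⟨b, hb, eqv_refl b, ?_⟩, invG_of_lower_bound hρ (m := m) hc ?_⟩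
  · obtain ⟨C, hC⟩ := ha' (m + 1)
    filter_upwards [hab, hC, hρ.eventually_mul_pow_succ_le C hc m] with ε habε hCε hsmallε
    linarith [le_abs_self ((a' - a) ε), show (a' - a) ε = a' ε - a ε from rfl]
  · exact hab.mono fun ε h => h.trans (le_abs_self _)

end LowerBounds

lemma eq_smul_single_add_smul_single (v : V2) :
    v = v 0 • EuclideanSpace.single 0 1 + v 1 • EuclideanSpace.single 1 1 := by
  ext i
  fin_cases i <;> simp

namespace IsLinearNet

variable {D D₁ D₂ : (ℝ → V2) → ℝ → V2} (hρ : Gauge ρ)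
include hρ

lemma sub (h₁ : IsLinearNet ρ D₁) (h₂ : IsLinearNet ρ D₂) :
    IsLinearNet ρ fun x => D₁ x - D₂ x := by
  refine ⟨fun x y hx hy hxy => (h₁.1 x y hx hy hxy).sub hρ (h₂.1 x y hx hy hxy),
    fun x hx => (h₁.2.1 x hx).sub hρ (h₂.2.1 x hx), fun x y hx hy => ?_, fun α x hα hx => ?_⟩
  · convert (h₁.2.2.1 x y hx hy).sub hρ (h₂.2.2.1 x y hx hy) using 1
    funext ε
    simp only [Pi.add_apply, Pi.sub_apply]
    abel
  · convert (h₁.2.2.2 α x hα hx).sub hρ (h₂.2.2.2 α x hα hx) using 1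
    funext ε
    simp [smul_sub]

lemma nglV2_apply_smul_const (hD : IsLinearNet ρ D) {α : ℝ → ℝ} (hα : Mod ρ α) {e : V2}
    (he : NglV2 ρ (D fun _ => e)) : NglV2 ρ (D fun ε => α ε • e) :=
  NglV2.of_eqvV2 hρ (hD.2.2.2 α (fun _ => e) hα (modV2_const e)) (he.mod_smul hρ hα)

lemma nglV2_apply (hD : IsLinearNet ρ D)
    (hsingle : ∀ i, NglV2 ρ (D fun _ => EuclideanSpace.single i 1)) {x : ℝ → V2}
    (hx : ModV2 ρ x) : NglV2 ρ (D x) := by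
  have hdecomp : x = (fun ε => x ε 0 • EuclideanSpace.single 0 1)
      + fun ε => x ε 1 • EuclideanSpace.single 1 1 :=
    funext fun ε => eq_smul_single_add_smul_single (x ε)
  rw [hdecomp]
  exact NglV2.of_eqvV2 hρ (hD.2.2.1 _ _ ((hx.apply 0).smul_const _) ((hx.apply 1).smul_const _))
    ((hD.nglV2_apply_smul_const hρ (hx.apply 0) (hsingle 0)).add hρ
      (hD.nglV2_apply_smul_const hρ (hx.apply 1) (hsingle 1)))

lemma nglV2_apply_const_sub_smul (hD : IsLinearNet ρ D) {r : (ℝ → V2) → ℝ → ℝ}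
    (hr : ∀ h, ModV2 ρ h → EqvV2 ρ (D h) fun ε => r h ε • h ε) {t : ℝ → ℝ} {m : ℕ} {c : ℝ}
    (hc : 0 < c) (ht : Mod ρ t) (ht_low : ∀ᶠ ε in F, c * ρ ε ^ m ≤ |t ε|) (e : V2) :
    NglV2 ρ fun ε => D (fun _ => e) ε - r (fun ε => t ε • e) ε • e := by
  have hscaled : NglV2 ρ fun ε =>
      (t ε)⁻¹ • t ε • (D (fun _ => e) ε - r (fun ε => t ε • e) ε • e) := by
    refine NglV2.mod_smul hρ (mod_inv_of_lower_bound hρ hc ht_low) ?_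
    have := (hD.2.2.2 t (fun _ => e) ht (modV2_const e)).symm.trans hρ
      (hr (fun ε => t ε • e) (ht.smul_const e))
    unfold EqvV2 at this
    convert this using 2
    simp [smul_sub, smul_smul, mul_comm]
  refine hscaled.congr ?_
  filter_upwards [ht_low, hρ.eventually_pos] with ε hε hpos
  exact inv_smul_smul₀ (abs_pos.1 (lt_of_lt_of_le (by positivity) hε)) _

lemma nglV2_apply_const (hD : IsLinearNet ρ D) (hOh : IsWeakOhNet ρ D) {e : V2}
    (he : ‖e‖ = 1) : NglV2 ρ (D fun _ => e) := by
  obtain ⟨r, hr, hr_small⟩ := hOh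
  intro q
  obtain ⟨H, hH_mod, hH_pos, hH⟩ := hr_small q
  obtain ⟨m, c, hc, hH_low⟩ := hH_pos.exists_lower_bound hρ
  set t : ℝ → ℝ := fun ε => c / 2 * ρ ε ^ m
  have ht_pos : ∀ᶠ ε in F, 0 < t ε := hρ.eventually_pos.mono fun ε h => by positivity
  have ht_low : ∀ᶠ ε in F, c / 2 * ρ ε ^ m ≤ |t ε| :=
    Eventually.of_forall fun ε => le_abs_self _
  have ht_mod : Mod ρ t := by
    refine ⟨0, c / 2, ?_⟩
    filter_upwards [ht_pos, hρ.eventually_pos, hρ.eventually_le_one] with ε htε hpos hle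
    rw [abs_of_pos htε, pow_zero, mul_one]
    exact mul_le_of_le_one_right (half_pos hc).le (pow_le_one₀ hpos.le hle)
  set h : ℝ → V2 := fun ε => t ε • e
  have hh_norm : (fun ε => ‖h ε‖) = fun ε => |t ε| := funext fun ε => by simp [h, norm_smul, he]
  have hr_lt : ltG ρ (fun ε => |r h ε|) fun ε => ρ ε ^ q := by
    refine hH h (ht_mod.smul_const e) ?_ ?_ <;> rw [hh_norm]
    · exact invG_of_lower_bound hρ (half_pos hc) (by simpa using ht_low)
    · refine ltG_of_lower_bound_sub hρ (m := m) (half_pos hc) hH_mod ?_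
      filter_upwards [hH_low, ht_pos] with ε hHε htε
      rw [abs_of_pos htε]
      simp only [t]
      linarith
  have hdiff := hD.nglV2_apply_const_sub_smul hρ hr (half_pos hc) ht_mod ht_low e
  have hr_mod : Mod ρ fun ε => |r h ε| := by
    obtain ⟨N, C, hC⟩ := ModV2.sub hρ (hD.2.1 _ (modV2_const e)) hdiff.modV2
    exact ⟨N, C, hC.mono fun ε hε => by simpa [norm_smul, he] using hε⟩
  obtain ⟨C, hC⟩ := hr_lt.1.exists_eventually_le_add hr_mod q
  obtain ⟨C', hC'⟩ := hdiff q
  refine ⟨C' + 1 + C, ?_⟩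
  filter_upwards [hC, hC'] with ε hCε hC'ε
  have := norm_le_norm_add_norm_sub' (D (fun _ => e) ε) (r h ε • e)
  rw [norm_smul, he, mul_one, Real.norm_eq_abs] at this
  linarith

end IsLinearNet

/-- The only linear map `ℝ̃_ρ² → ℝ̃_ρ²` which is a weak little-oh of `h` is the zero map;
consequently differentials are unique. -/
theorem linear_littleOh_is_zero (ρ : ℝ → ℝ) (hρ : Gauge ρ) :
    (∀ D, IsLinearNet ρ D → IsWeakOhNet ρ D →
      ∀ h, ModV2 ρ h → EqvV2 ρ (D h) 0) ∧
    (∀ D₁ D₂, IsLinearNet ρ D₁ → IsLinearNet ρ D₂ →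
      IsWeakOhNet ρ (fun h => D₁ h - D₂ h) →
      ∀ h, ModV2 ρ h → EqvV2 ρ (D₁ h) (D₂ h)) := by
  have hzero : ∀ D, IsLinearNet ρ D → IsWeakOhNet ρ D → ∀ h, ModV2 ρ h → EqvV2 ρ (D h) 0 :=
    fun D hD hOh h hh => by
      simpa [EqvV2] using hD.nglV2_apply hρ (fun i => hD.nglV2_apply_const hρ hOh (by simp)) hh
  refine ⟨hzero, fun D₁ D₂ h₁ h₂ hOh h hh => ?_⟩
  simpa [EqvV2] using hzero _ (h₁.sub hρ h₂) hOh h hh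

end RC
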